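/- Let p be a prime and P a finite p-group. Let A and B be subgroups of the automorphism group of P such that A and B commute elementwise (so that A × B acts on P), A is a p'-group (its order is coprime to p), and B is a p-group. If every element of A acts trivially on the subgroup C_P(B) of fixed points of B in P, then A is the trivial group. -/

import Mathlib

/-!
Induct on `|P|`. The subgroup `R = Z(P) ∩ C_P(B)` is nontrivial, since the `p`-group `B` acting on
the nontrivial `p`-group `Z(P)` has a nontrivial fixed point, and `A` fixes it pointwise. The
hypothesis passes to `P/R`: if `xR` is `B`-fixed, then `k = x⁻¹ a(x)` is `B`-fixed because `R` is
central and fixed by `a`, so `a(k) = k`; and an automorphism of `p'`-order fixing `x⁻¹ a(x)` fixes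
`x`. By induction `A` is trivial on `P/R`, and the same coprimality argument lifts this to `P`.
-/

open MulAction Subgroup

namespace MulAction.QuotientAction

variable {A P : Type*} [Monoid A] [Group P] [MulDistribMulAction A P] (N : Subgroup P)

theorem of_forall_smul_mem (h : ∀ a : A, ∀ n ∈ N, a • n ∈ N) : QuotientAction A N :=
  ⟨fun a x y hxy => by simpa only [← smul_inv', ← smul_mul'] using h a _ hxy⟩

instance mulDistribMulAction [N.Normal] [QuotientAction A N] :
    MulDistribMulAction A (P ⧸ N) where
  __ := MulAction.quotient A N
  smul_mul a q₁ q₂ := by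
    induction q₁ using QuotientGroup.induction_on
    induction q₂ using QuotientGroup.induction_on
    exact congrArg ((↑) : P → P ⧸ N) (smul_mul' a _ _)
  smul_one a := congrArg ((↑) : P → P ⧸ N) (smul_one a)

instance smulCommClass {B : Type*} [Monoid B] [MulDistribMulAction B P] [SMulCommClass A B P]
    [QuotientAction A N] [QuotientAction B N] : SMulCommClass A B (P ⧸ N) where
  smul_comm a b q := by
    induction q using QuotientGroup.induction_on
    exact congrArg ((↑) : P → P ⧸ N) (smul_comm a b _)

end MulAction.QuotientAction

theorem Subgroup.card_quotient_lt_card {P : Type*} [Group P] [Finite P] {N : Subgroup P}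
    (hN : N ≠ ⊥) : Nat.card (P ⧸ N) < Nat.card P := by
  rw [N.card_eq_card_quotient_mul_card_subgroup]
  exact lt_mul_of_one_lt_right Nat.card_pos ((one_lt_card_iff_ne_bot N).mpr hN)

section ThompsonAB

variable {p : ℕ} {A B P : Type*} [Group A] [Group B] [Group P]
  [MulDistribMulAction A P] [MulDistribMulAction B P]

theorem Subgroup.smul_mem_center {b : B} {z : P} (hz : z ∈ center P) : b • z ∈ center P := by
  rw [mem_center_iff] at hz ⊢
  intro g
  rw [← smul_inv_smul b g, ← smul_mul', hz, smul_mul']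

variable (B P) in
def Subgroup.centerSubMulAction : SubMulAction B P where
  carrier := center P
  smul_mem' _ _ := smul_mem_center

theorem IsPGroup.center_inf_fixedPoints_ne_bot [Fact p.Prime] [Finite P] [Nontrivial P]
    (hP : IsPGroup p P) (hB : IsPGroup p B) : center P ⊓ FixedPoints.subgroup B P ≠ ⊥ := by
  obtain ⟨n, hn0, hn⟩ := (hP.to_subgroup (center P)).nontrivial_iff_card.mp hP.center_nontrivial
  have hdvd : p ∣ Nat.card (centerSubMulAction B P) := hn ▸ dvd_pow_self p hn0.ne'
  obtain ⟨z, hz, hz1⟩ := hB.exists_fixed_point_of_prime_dvd_card_of_fixed_point _ hdvd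
    (a := ⟨1, (center P).one_mem⟩) fun b => Subtype.ext (smul_one b)
  intro hbot
  exact hz1 (Subtype.ext ((eq_bot_iff_forall _).mp hbot z
    ⟨z.2, fun b => congrArg Subtype.val (hz b)⟩).symm)

theorem IsPGroup.smul_eq_self_of_smul_inv_mul_smul (hP : IsPGroup p P)
    (hA : (Nat.card A).Coprime p) {a : A} {x : P} (h : a • (x⁻¹ * a • x) = x⁻¹ * a • x) :
    a • x = x := by
  set k := x⁻¹ * a • x
  -- `a ^ m • x = x * k ^ m`, so the order of `k` divides both `|A|` and a power of `p`.
  have hax : a • x = x * k := (mul_inv_cancel_left x _).symm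
  have hpow : ∀ m : ℕ, (a ^ m) • x = x * k ^ m := by
    intro m
    induction m with
    | zero => simp
    | succ m ih => rw [pow_succ', mul_smul, ih, smul_mul', hax, smul_pow', h, mul_assoc, ← pow_succ']
  have hk : k ^ Nat.card A = 1 := by
    simpa [pow_card_eq_one'] using (hpow (Nat.card A)).symm
  obtain ⟨n, hn⟩ := hP k
  have hord : orderOf k = 1 := Nat.eq_one_of_dvd_coprimes (hA.pow_right n)
    (orderOf_dvd_of_pow_eq_one hk) (orderOf_dvd_of_pow_eq_one hn)
  rw [hax, orderOf_eq_one_iff.mp hord, mul_one]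

variable [SMulCommClass A B P]

theorem IsPGroup.smul_eq_self_of_forall_inv_mul_smul_mem (hP : IsPGroup p P)
    (hA : (Nat.card A).Coprime p) (hfix : FixedPoints.subgroup B P ≤ FixedPoints.subgroup A P)
    {N : Subgroup P} (hNc : N ≤ center P) (hNA : N ≤ FixedPoints.subgroup A P) {x : P}
    (hx : ∀ b : B, x⁻¹ * b • x ∈ N) (a : A) : a • x = x := by
  refine hP.smul_eq_self_of_smul_inv_mul_smul hA (hfix (fun b => ?_) a)
  set r := x⁻¹ * b • x
  have hbx : b • x = x * r := (mul_inv_cancel_left x _).symm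
  have hr : ∀ g, g * r = r * g := mem_center_iff.mp (hNc (hx b))
  rw [smul_mul', smul_inv', ← smul_comm a b x, hbx, smul_mul', hNA (hx b) a, hr x, hr (a • x)]
  group

theorem IsPGroup.smul_eq_self_of_fixedPoints_le [Fact p.Prime] [Finite P] (hP : IsPGroup p P)
    (hA : (Nat.card A).Coprime p) (hB : IsPGroup p B)
    (hfix : FixedPoints.subgroup B P ≤ FixedPoints.subgroup A P) (a : A) (x : P) :
    a • x = x := by
  induction hn : Nat.card P using Nat.strong_induction_on generalizing P with
  | _ n ih =>
  rcases subsingleton_or_nontrivial P with _ | _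
  · exact Subsingleton.elim _ _
  set R := center P ⊓ FixedPoints.subgroup B P
  have hRc : R ≤ center P := inf_le_left
  have hRA : R ≤ FixedPoints.subgroup A P := fun r hr => hfix hr.2
  have : R.Normal := ⟨fun r hr g => by rwa [mem_center_iff.mp (hRc hr) g, mul_inv_cancel_right]⟩
  have := QuotientAction.of_forall_smul_mem (A := A) R fun a r hr => (hRA hr a).symm ▸ hr
  have := QuotientAction.of_forall_smul_mem (A := B) R fun b r hr => (hr.2 b).symm ▸ hr
  have hfixR : FixedPoints.subgroup B (P ⧸ R) ≤ FixedPoints.subgroup A (P ⧸ R) := by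
    intro q hq a
    induction q using QuotientGroup.induction_on with | H y =>
    exact congrArg _ (hP.smul_eq_self_of_forall_inv_mul_smul_mem hA hfix hRc hRA
      (fun b => QuotientGroup.eq.mp (hq b).symm) a)
  have hquot : ∀ q : P ⧸ R, a • q = q := fun q =>
    ih _ (hn ▸ card_quotient_lt_card (hP.center_inf_fixedPoints_ne_bot hB))
      (hP.to_quotient R) hfixR q rfl
  exact hP.smul_eq_self_of_smul_inv_mul_smul hA (hRA (QuotientGroup.eq.mp (hquot x).symm) a)

end ThompsonAB

/-- **Thompson's A × B-Lemma.** Let `p` be a prime and `P` a finite `p`-group.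
Let `A` and `B` be subgroups of `Aut(P)` that commute elementwise, with `A`
a `p'`-group and `B` a `p`-group. If every element of `A` acts trivially on
the fixed-point subgroup `C_P(B)`, then `A` is trivial. -/
theorem thompson_A_times_B_lemma {p : ℕ} [Fact p.Prime]
    (P : Type*) [Group P] [Fintype P] (hP : IsPGroup p P)
    (A B : Subgroup (MulAut P))
    (hcomm : ∀ a ∈ A, ∀ b ∈ B, Commute a b)
    (hA : (Nat.card A).Coprime p)
    (hB : IsPGroup p B)
    (hfix : ∀ a ∈ A, ∀ x : P, (∀ b ∈ B, b x = x) → a x = x) :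
    A = ⊥ := by
  have : SMulCommClass A B P := ⟨fun a b x => DFunLike.congr_fun (hcomm a a.2 b b.2) x⟩
  have hAB : FixedPoints.subgroup B P ≤ FixedPoints.subgroup A P :=
    fun x hx a => hfix a a.2 x fun b hb => hx ⟨b, hb⟩
  rw [eq_bot_iff_forall]
  exact fun a ha => MulEquiv.ext (hP.smul_eq_self_of_fixedPoints_le hA hB hAB ⟨a, ha⟩)
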